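/- arXiv:1908.01026 — 6 statements merged into one kernel-verified Lean document; each statement's English description precedes it below -/
import Mathlib

section
/- A Euclidean billiard partition π is irreducible (i.e., no single part of π can be decreased by 2 while keeping the result a Euclidean billiard partition with the same number of parts) if and only if: the smallest part equals 2, no two adjacent parts are both odd, and the difference between any two adjacent parts is at most 2. -/
/-!
Lowering a part `m` to `m - 2` keeps its parity (or makes it even), so it can neither create two
adjacent odd parts nor an odd smallest part. Appending a sentinel part `0` turns positivity into
one more link of the strictly decreasing chain, so lowering `mᵢ` gives a Euclidean billiard
partition exactly when `mᵢ - 2 > mᵢ₊₁`, where `m_{d+1} = 0`. Irreducibility thus says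
`mᵢ ≤ mᵢ₊₁ + 2` along the chain with the sentinel, i.e. adjacent gaps are at most `2` and the
smallest part, being even and positive, is `2`.
-/

/-- A Euclidean billiard partition: a strictly decreasing list of positive
integers, whose smallest (last) part is even, and in which no two adjacent
parts are both odd. -/
def EBP (L : List ℕ) : Prop :=
  L ≠ [] ∧ (∀ m ∈ L, 0 < m) ∧ L.Chain' (· > ·) ∧
    Even (L.getLastD 1) ∧ L.Chain' fun a b => ¬(Odd a ∧ Odd b)


/-- `π` is irreducible if no single part can be decreased by 2 so that the
result is again a Euclidean billiard partition. -/
def Irreducible' (L : List ℕ) : Prop :=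
  ∀ i < L.length, ¬ EBP (L.set i (L.getD i 0 - 2))

namespace List

variable {α : Type*} {R : α → α → Prop} {l : List α}

theorem IsChain.set {i : ℕ} {y : α} (hl : l.IsChain R)
    (hleft : ∀ j (hj : j < l.length), j + 1 = i → R l[j] y)
    (hright : ∀ hi : i + 1 < l.length, R y l[i + 1]) : (l.set i y).IsChain R := by
  rw [isChain_iff_getElem] at hl ⊢
  intro k hk
  simp only [length_set] at hk
  simp only [getElem_set]
  split_ifs with hk0 hk1 hk1
  · omega
  · subst hk0; exact hright hk
  · subst hk1; exact hleft k (by omega) rfl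
  · exact hl k hk

theorem isChain_append_singleton_iff {d : α} :
    (l ++ [d]).IsChain R ↔ ∀ i (hi : i < l.length), R l[i] ((l ++ [d])[i + 1]'(by simpa)) := by
  simp only [isChain_iff_getElem, length_append, length_singleton, Nat.add_lt_add_iff_right]
  exact forall₂_congr fun i hi => by rw [getElem_append_left hi]

end List

open List

theorem isChain_gt_append_zero_iff {L : List ℕ} :
    (L ++ [0]).IsChain (· > ·) ↔ (∀ m ∈ L, 0 < m) ∧ L.IsChain (· > ·) := by
  simp only [isChain_iff_pairwise, pairwise_append, mem_singleton, forall_eq, pairwise_singleton,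
    true_and]
  exact and_comm

-- The sentinel `1` is odd, so the last link says exactly that the smallest part is even.
theorem isChain_not_odd_append_one_iff {L : List ℕ} (hL : L ≠ []) :
    (L ++ [1]).IsChain (fun a b => ¬(Odd a ∧ Odd b)) ↔
      Even (L.getLastD 1) ∧ L.IsChain (fun a b => ¬(Odd a ∧ Odd b)) := by
  simp [isChain_append, getLast?_eq_some_getLast hL, getLastD_eq_getLast?, and_comm]

theorem ebp_iff_isChain_append {L : List ℕ} : EBP L ↔ L ≠ [] ∧ (L ++ [0]).IsChain (· > ·) ∧
    (L ++ [1]).IsChain (fun a b => ¬(Odd a ∧ Odd b)) := by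
  unfold EBP
  rw [isChain_gt_append_zero_iff]
  constructor
  · rintro ⟨hne, hpos, hdec, hlast, hpar⟩
    exact ⟨hne, ⟨hpos, hdec⟩, (isChain_not_odd_append_one_iff hne).2 ⟨hlast, hpar⟩⟩
  · rintro ⟨hne, ⟨hpos, hdec⟩, hpar⟩
    exact ⟨hne, hpos, hdec, (isChain_not_odd_append_one_iff hne).1 hpar⟩

theorem isChain_not_odd_set_sub_two {l : List ℕ} (hl : l.IsChain (fun a b => ¬(Odd a ∧ Odd b)))
    {i : ℕ} (hi : i < l.length) : (l.set i (l[i] - 2)).IsChain (fun a b => ¬(Odd a ∧ Odd b)) := by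
  have hodd : Odd (l[i] - 2) → Odd l[i] := fun h => by
    have := Nat.odd_iff.mp h; exact Nat.odd_iff.mpr (by omega)
  refine hl.set (fun j _ hji => ?_) (fun hi1 h => ?_)
  · subst hji
    exact fun h => isChain_iff_getElem.mp hl j hi ⟨h.1, hodd h.2⟩
  · exact isChain_iff_getElem.mp hl i hi1 ⟨hodd h.1, h.2⟩

theorem isChain_gt_set_sub_two_iff {l : List ℕ} (hl : l.IsChain (· > ·)) {i : ℕ}
    (hi : i + 1 < l.length) :
    (l.set i (l[i] - 2)).IsChain (· > ·) ↔ l[i + 1] + 2 < l[i] := by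
  constructor
  · intro h
    have := isChain_iff_getElem.mp h i (by simpa)
    simp only [getElem_set_self, getElem_set_ne (by omega : i ≠ i + 1)] at this
    omega
  · intro h
    refine hl.set (fun j _ hji => ?_) (fun _ => by omega)
    subst hji
    have := isChain_iff_getElem.mp hl j (by omega)
    omega

theorem EBP.set_sub_two_iff {L : List ℕ} (hL : EBP L) {i : ℕ} (hi : i < L.length) :
    EBP (L.set i (L[i] - 2)) ↔ (L ++ [0])[i + 1]'(by simpa) + 2 < L[i] := by
  rw [ebp_iff_isChain_append] at hL ⊢
  obtain ⟨hne, hdec, hpar⟩ := hL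
  have hset : ∀ c,
      L.set i (L[i] - 2) ++ [c] = (L ++ [c]).set i ((L ++ [c])[i]'(by simp; omega) - 2) :=
    fun c => by rw [getElem_append_left hi, set_append_left i _ hi]
  rw [hset, hset, isChain_gt_set_sub_two_iff hdec (by simpa), getElem_append_left hi]
  have hpar' := isChain_not_odd_set_sub_two hpar (i := i) (by simp; omega)
  simp only [ne_eq, set_eq_nil_iff, hne, not_false_eq_true, true_and, hpar', and_true]

/-- A Euclidean billiard partition is irreducible iff its smallest part is 2
and adjacent parts differ by at most 2 (the no-two-adjacent-odd condition
being part of the definition of a Euclidean billiard partition). -/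
theorem irreducibleEBP_iff (L : List ℕ) (hL : EBP L) :
    Irreducible' L ↔
      L.getLastD 1 = 2 ∧ L.Chain' (fun a b => a ≤ b + 2) := by
  have hirr : Irreducible' L ↔ (L ++ [0]).IsChain (fun a b => a ≤ b + 2) := by
    rw [isChain_append_singleton_iff]
    refine forall₂_congr fun i hi => ?_
    rw [getD_eq_getElem _ _ hi, hL.set_sub_two_iff hi, not_lt]
  obtain ⟨hne, hpos, -, hlast, -⟩ := hL
  rw [getLastD_eq_getLast?, getLast?_eq_some_getLast hne, Option.getD_some] at hlast ⊢
  have hlast_le : L.getLast hne ≤ 0 + 2 ↔ L.getLast hne = 2 := by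
    have := hpos _ (getLast_mem hne)
    obtain ⟨k, hk⟩ := hlast
    omega
  rw [hirr, isChain_append, getLast?_eq_some_getLast hne]
  simp only [Option.mem_def, Option.some.injEq, forall_eq', head?_cons, isChain_singleton,
    true_and, hlast_le]
  exact and_comm
end

section
/- Every Euclidean billiard partition π with d parts can be uniquely written as π = π₁ + π₂ (componentwise sum of parts), where π₁ is an irreducible Euclidean billiard partition with d parts and π₂ is a weakly decreasing sequence of d nonnegative even integers; conversely, every such sum is a Euclidean billiard partition. -/
/-- An irreducible Euclidean billiard partition: additionally the smallest
part equals 2 and adjacent parts differ by at most 2. -/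
def IrrEBP (L : List ℕ) : Prop :=
  EBP L ∧ L.getLastD 1 = 2 ∧ L.Chain' fun a b => a ≤ b + 2

/-!
The parity pattern of a Euclidean billiard partition already determines an irreducible one:
reading from the smallest part `2` upwards, consecutive parts of an irreducible partition must
differ by `2` when they have equal parity and by `1` otherwise. Call this partition the core
`π₁` of `π`. Its consecutive differences are the least ones compatible with the parities of `π`,
so `π - π₁` is weakly decreasing, and it is even because `π₁ ≡ π` mod 2. Conversely, adding a
weakly decreasing even sequence keeps the parts strictly decreasing and keeps the parity pattern,
which is all the remaining conditions depend on.
-/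

namespace List

variable {α β γ : Type*}

theorem IsChain.zipWith {R : α → α → Prop} {S : β → β → Prop} {T : γ → γ → Prop}
    {f : α → β → γ} (h : ∀ ⦃a a' b b'⦄, R a a' → S b b' → T (f a b) (f a' b')) :
    ∀ {l₁ : List α} {l₂ : List β}, l₁.IsChain R → l₂.IsChain S → (zipWith f l₁ l₂).IsChain T
  | [], _, _, _ | _ :: _, [], _, _ => .nil
  | [_], _ :: _, _, _ | _ :: _ :: _, [_], _, _ => .singleton _
  | _ :: _ :: _, _ :: _ :: _, h₁, h₂ => by
      rw [isChain_cons_cons] at h₁ h₂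
      exact .cons_cons (h h₁.1 h₂.1) (IsChain.zipWith h h₁.2 h₂.2)

theorem forall_mem_zipWith {P : γ → Prop} {f : α → β → γ} {l₁ : List α} {l₂ : List β}
    (h : ∀ a ∈ l₁, ∀ b ∈ l₂, P (f a b)) : ∀ x ∈ zipWith f l₁ l₂, P x := by
  intro x hx
  rw [← map_uncurry_zip_eq_zipWith] at hx
  obtain ⟨⟨a, b⟩, hab, rfl⟩ := mem_map.1 hx
  exact h a (of_mem_zip hab).1 b (of_mem_zip hab).2

theorem Forall₂.forall_mem_zipWith {R : α → β → Prop} {P : γ → Prop} {f : α → β → γ}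
    (hf : ∀ a b, R a b → P (f a b)) {l₁ : List α} {l₂ : List β} (h : Forall₂ R l₁ l₂) :
    ∀ x ∈ zipWith f l₁ l₂, P x := by
  induction h with
  | nil => simp
  | cons hab _ ih => exact forall_mem_cons.2 ⟨hf _ _ hab, ih⟩

section OrderedSub

variable [AddCommMonoid α] [PartialOrder α] [Sub α] [OrderedSub α]

theorem zipWith_add_zipWith_tsub [CanonicallyOrderedAdd α] {l₁ l₂ : List α}
    (h : Forall₂ (· ≥ ·) l₁ l₂) : zipWith (· + ·) l₂ (zipWith (· - ·) l₁ l₂) = l₁ := by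
  induction h with
  | nil => rfl
  | cons hab _ ih => rw [zipWith_cons_cons, zipWith_cons_cons, add_tsub_cancel_of_le hab, ih]

theorem zipWith_tsub_zipWith_add_cancel_left [AddLeftReflectLE α] :
    ∀ {l₁ l₂ : List α}, l₁.length = l₂.length →
      zipWith (· - ·) (zipWith (· + ·) l₁ l₂) l₁ = l₂
  | [], [], _ => rfl
  | a :: l₁, b :: l₂, h => by
      rw [zipWith_cons_cons, zipWith_cons_cons, add_tsub_cancel_left,
        zipWith_tsub_zipWith_add_cancel_left (Nat.succ_injective h)]

end OrderedSub

theorem map_mod_two_zipWith_add :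
    ∀ {l₁ l₂ : List ℕ}, l₁.length ≤ l₂.length → (∀ b ∈ l₂, Even b) →
      (zipWith (· + ·) l₁ l₂).map (· % 2) = l₁.map (· % 2)
  | [], _, _, _ => rfl
  | _ :: _, [], h, _ => absurd h (by simp)
  | a :: l₁, b :: l₂, h, hev => by
      rw [forall_mem_cons, Nat.even_iff] at hev
      rw [zipWith_cons_cons, map_cons, map_cons,
        map_mod_two_zipWith_add (Nat.succ_le_succ_iff.1 h) hev.2]
      congr 1
      omega

theorem even_of_mem_zipWith_tsub {l₁ l₂ : List ℕ} (h : l₁.map (· % 2) = l₂.map (· % 2)) :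
    ∀ x ∈ zipWith (· - ·) l₁ l₂, Even x := by
  rw [← forall₂_eq_eq_eq, forall₂_map_left_iff, forall₂_map_right_iff] at h
  exact h.forall_mem_zipWith fun a b hab => Nat.even_iff.2 (by omega)

end List

open List

namespace IrrEBP

theorem tail {a b : ℕ} {l : List ℕ} (h : IrrEBP (a :: b :: l)) : IrrEBP (b :: l) := by
  obtain ⟨⟨-, hpos, hdec, hev, hodd⟩, hlast, hgap⟩ := h
  rw [getLastD_cons, getLastD_cons] at hev hlast
  exact ⟨⟨cons_ne_nil b l, fun m hm => hpos m (mem_cons_of_mem a hm), IsChain.tail hdec,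
    by rwa [getLastD_cons], IsChain.tail hodd⟩, by rwa [getLastD_cons], IsChain.tail hgap⟩

theorem eq_of_map_mod_two_eq : ∀ {A A' : List ℕ}, IrrEBP A → IrrEBP A' →
    A.map (· % 2) = A'.map (· % 2) → A = A'
  | [], _, hA, _, _ => (hA.1.1 rfl).elim
  | _, [], _, hA', _ => (hA'.1.1 rfl).elim
  | [_], [_], hA, hA', _ => congrArg ([·]) (hA.2.1.trans hA'.2.1.symm)
  | [_], _ :: _ :: _, _, _, h | _ :: _ :: _, [_], _, _, h => by simp at h
  | a :: b :: l, a' :: b' :: l', hA, hA', h => by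
      simp only [map_cons, cons.injEq] at h
      obtain ⟨rfl, rfl⟩ := cons.inj (eq_of_map_mod_two_eq hA.tail hA'.tail (by simp [h]))
      obtain ⟨⟨-, -, hdec, -, -⟩, -, hgap⟩ := hA
      obtain ⟨⟨-, -, hdec', -, -⟩, -, hgap'⟩ := hA'
      have := (isChain_cons_cons.1 hdec).1
      have := (isChain_cons_cons.1 hdec').1
      have := (isChain_cons_cons.1 hgap).1
      have := (isChain_cons_cons.1 hgap').1
      -- `b < a ≤ b + 2` determines `a` from its parity.
      congr 1
      omega

end IrrEBP

namespace EBP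

theorem of_map_mod_two_eq {L L' : List ℕ} (hL : EBP L) (h : L.map (· % 2) = L'.map (· % 2))
    (hpos : ∀ m ∈ L', 0 < m) (hdec : L'.IsChain (· > ·)) : EBP L' := by
  obtain ⟨hne, -, -, hev, hodd⟩ := hL
  have getLastD_mod : ∀ l : List ℕ, (l.map (· % 2)).getLastD 1 = l.getLastD 1 % 2 :=
    fun _ => getLastD_map (f := (· % 2)) (a := 1)
  have no_two_odd_iff : ∀ l : List ℕ, l.IsChain (fun a b => ¬(Odd a ∧ Odd b)) ↔
      (l.map (· % 2)).IsChain (fun p q => ¬(p = 1 ∧ q = 1)) := by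
    intro l
    simp only [isChain_map, Nat.odd_iff]
  refine ⟨?_, hpos, hdec, ?_, (no_two_odd_iff L').2 (h ▸ (no_two_odd_iff L).1 hodd)⟩
  · rintro rfl
    exact hne (map_eq_nil_iff.1 h)
  · rw [Nat.even_iff] at hev ⊢
    rwa [← getLastD_mod, ← h, getLastD_mod]

theorem zipWith_add {A B : List ℕ} (hA : EBP A) (hlen : A.length ≤ B.length)
    (hdec : B.IsChain (· ≥ ·)) (hev : ∀ b ∈ B, Even b) : EBP (zipWith (· + ·) A B) := by
  have ⟨_, hpos, hAdec, _, _⟩ := hA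
  exact hA.of_map_mod_two_eq (map_mod_two_zipWith_add hlen hev).symm
    (forall_mem_zipWith fun a ha _ _ => Nat.add_pos_left (hpos a ha) _)
    (IsChain.zipWith (R := (· > ·)) (fun _ _ _ _ => add_lt_add_of_lt_of_le) hAdec hdec)

-- `core L` is the irreducible partition with the parity pattern of `L` (when its last part is
-- even), and `coreHead L` its largest part: starting from `2`, consecutive parts differ by `2`
-- when they have equal parity and by `1` otherwise.
def coreHead : List ℕ → ℕ
  | [] => 0
  | [_] => 2
  | a :: b :: l => coreHead (b :: l) + if a % 2 = b % 2 then 2 else 1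

def core : List ℕ → List ℕ
  | [] => []
  | a :: l => coreHead (a :: l) :: core l

theorem length_core : ∀ L : List ℕ, (core L).length = L.length
  | [] => rfl
  | _ :: l => congrArg (· + 1) (length_core l)

theorem getLastD_core : ∀ {L : List ℕ} (d : ℕ), L ≠ [] → (core L).getLastD d = 2
  | [_], _, _ => rfl
  | a :: b :: l, _, _ => getLastD_core (L := b :: l) (coreHead (a :: b :: l)) (cons_ne_nil b l)

theorem two_le_coreHead : ∀ (a : ℕ) (l : List ℕ), 2 ≤ coreHead (a :: l)
  | _, [] => le_rfl
  | _, b :: l => (two_le_coreHead b l).trans (Nat.le_add_right _ _)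

theorem two_le_of_mem_core : ∀ {L : List ℕ} {x : ℕ}, x ∈ core L → 2 ≤ x
  | a :: l, x, hx => by
      rcases mem_cons.1 hx with rfl | hx
      · exact two_le_coreHead a l
      · exact two_le_of_mem_core hx

theorem isChain_core : ∀ L : List ℕ, (core L).IsChain (fun a b => b < a ∧ a ≤ b + 2)
  | [] => .nil
  | [_] => .singleton _
  | a :: b :: l => .cons_cons (by simp only [coreHead]; split <;> omega) (isChain_core (b :: l))

theorem map_mod_two_core : ∀ {L : List ℕ}, Even (L.getLastD 1) →
    (core L).map (· % 2) = L.map (· % 2)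
  | [], _ => rfl
  | [a], hev => by simpa [core, coreHead, Nat.even_iff, eq_comm] using hev
  | a :: b :: l, hev => by
      have ih := map_mod_two_core (L := b :: l) (by simpa only [getLastD_cons] using hev)
      simp only [core, map_cons, cons.injEq] at ih ⊢
      refine ⟨?_, ih⟩
      simp only [coreHead]
      split <;> omega

theorem forall₂_ge_core : ∀ {L : List ℕ}, L.IsChain (· > ·) → Even (L.getLastD 1) →
    (∀ m ∈ L, 0 < m) → Forall₂ (· ≥ ·) L (core L)
  | [], _, _, _ => .nil
  | [a], _, hev, hpos => by
      have := hpos a (mem_singleton_self a)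
      rw [Nat.even_iff] at hev
      exact .cons (by simp only [coreHead, getLastD_cons, getLastD_nil] at hev ⊢; omega) .nil
  | a :: b :: l, hdec, hev, hpos => by
      rw [isChain_cons_cons] at hdec
      have ih := forall₂_ge_core hdec.2 (by simpa only [getLastD_cons] using hev)
        fun m hm => hpos m (mem_cons_of_mem a hm)
      have hb := (forall₂_cons.1 ih).1
      refine .cons ?_ ih
      simp only [coreHead] at hb ⊢
      split <;> omega

theorem isChain_tsub_core : ∀ {L : List ℕ}, L.IsChain (· > ·) → Forall₂ (· ≥ ·) L (core L) →
    (zipWith (· - ·) L (core L)).IsChain (· ≥ ·)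
  | [], _, _ => .nil
  | [_], _, _ => .singleton _
  | a :: b :: l, hdec, h => by
      rw [isChain_cons_cons] at hdec
      obtain ⟨-, h⟩ := forall₂_cons.1 h
      have hb := (forall₂_cons.1 h).1
      refine .cons_cons ?_ (isChain_tsub_core hdec.2 h)
      simp only [coreHead] at hb ⊢
      split <;> omega

theorem irrEBP_core {L : List ℕ} (hL : EBP L) : IrrEBP (core L) := by
  have ⟨hne, _, _, hev, _⟩ := hL
  refine ⟨hL.of_map_mod_two_eq (map_mod_two_core hev).symm
    (fun x hx => (two_le_of_mem_core hx).trans_lt' two_pos)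
    ((isChain_core L).imp fun _ _ => And.left), getLastD_core 1 hne,
    (isChain_core L).imp fun _ _ => And.right⟩

def IsDecomposition (L A B : List ℕ) : Prop :=
  IrrEBP A ∧ A.length = L.length ∧ B.length = L.length ∧ B.IsChain (· ≥ ·) ∧
    (∀ m ∈ B, Even m) ∧ L = zipWith (· + ·) A B

theorem isDecomposition_core {L : List ℕ} (hL : EBP L) :
    IsDecomposition L (core L) (zipWith (· - ·) L (core L)) := by
  have ⟨_, hpos, hdec, hev, _⟩ := hL
  have hge := forall₂_ge_core hdec hev hpos
  exact ⟨hL.irrEBP_core, length_core L, by simp [length_core], isChain_tsub_core hdec hge,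
    even_of_mem_zipWith_tsub (map_mod_two_core hev).symm, (zipWith_add_zipWith_tsub hge).symm⟩

theorem IsDecomposition.eq_core {L A B : List ℕ} (h : IsDecomposition L A B) :
    (A, B) = (core L, zipWith (· - ·) L (core L)) := by
  obtain ⟨hA, hAlen, hBlen, hdec, hev, rfl⟩ := h
  have hlen : A.length = B.length := hAlen.trans hBlen.symm
  have hL := zipWith_add hA.1 hlen.le hdec hev
  have ⟨_, _, _, hLev, _⟩ := hL
  have hA_core : A = core (zipWith (· + ·) A B) := hA.eq_of_map_mod_two_eq hL.irrEBP_core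
    ((map_mod_two_zipWith_add hlen.le hev).symm.trans (map_mod_two_core hLev).symm)
  rw [← hA_core, zipWith_tsub_zipWith_add_cancel_left hlen]

end EBP

/-- Every Euclidean billiard partition with `d` parts is uniquely the
componentwise sum of an irreducible Euclidean billiard partition with `d`
parts and a weakly decreasing list of `d` even natural numbers; conversely
every such sum is a Euclidean billiard partition. -/
theorem ebp_decomposition :
    (∀ L : List ℕ, EBP L →
      ∃! p : List ℕ × List ℕ,
        IrrEBP p.1 ∧ p.1.length = L.length ∧ p.2.length = L.length ∧
          p.2.Chain' (· ≥ ·) ∧ (∀ m ∈ p.2, Even m) ∧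
          L = List.zipWith (· + ·) p.1 p.2) ∧
    (∀ L₁ L₂ : List ℕ, IrrEBP L₁ → L₂.length = L₁.length →
      L₂.Chain' (· ≥ ·) → (∀ m ∈ L₂, Even m) →
      EBP (List.zipWith (· + ·) L₁ L₂)) :=
  ⟨fun L hL => ⟨(EBP.core L, zipWith (· - ·) L (EBP.core L)), hL.isDecomposition_core,
    fun _ h => EBP.IsDecomposition.eq_core h⟩,
    fun _ _ hA hlen hdec hev => EBP.zipWith_add hA.1 hlen.ge hdec hev⟩
end

section
/- For d > 1, the generating polynomial s(d, 2n) for irreducible Euclidean billiard partitions with d parts and largest part 2n satisfies the recurrence s(d, 2n) = q^{2n} ( s(d-1, 2n-1) + x · s(d-1, 2n-2) ), where the x-weight of a partition with d parts, largest part N, and s odd parts is x^{d-1-2s} if N is even and x^{d-2s} if N is odd. -/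
/-- The number of odd parts of a list. -/
def oddCount (L : List ℕ) : ℕ := (L.filter fun m => m % 2 = 1).length

/-- The weight exponent: `d - 1 - 2s` if the largest part is even and
`d - 2s` if it is odd, where `d` is the number of parts and `s` the number
of odd parts. -/
def wt (L : List ℕ) : ℕ :=
  if L.headD 0 % 2 = 0 then L.length - 1 - 2 * oddCount L
  else L.length - 2 * oddCount L

/-- The generating polynomial `s(d, N) = Σ_π x^{wt π} q^{|π|}` over irreducible
Euclidean billiard partitions with `d` parts and largest part `N`, where
`x = X 0` and `q = X 1`. -/
noncomputable def sPoly (d N : ℕ) : MvPolynomial (Fin 2) ℤ :=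
  ∑ᶠ L ∈ {L : List ℕ | IrrEBP L ∧ L.length = d ∧ L.headD 0 = N},
    MvPolynomial.X 0 ^ wt L * MvPolynomial.X 1 ^ L.sum

/-! Consecutive parts differ by 1 or 2, so a partition counted by `s(d, 2n)` with `d > 1` is `2n`
followed by a partition counted by `s(d-1, 2n-1)` or by `s(d-1, 2n-2)`. Prepending the even part
`2n` multiplies the monomial by `q^{2n}`; it keeps the weight exponent when the next part is odd
and raises it by one when the next part is even. In the latter case the truncated subtraction in
`wt` is harmless: odd parts are isolated and the last part is even, so `2s < d`. -/

open MvPolynomial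

theorem List.finite_length_eq_forall_mem_le (d N : ℕ) :
    {L : List ℕ | L.length = d ∧ ∀ x ∈ L, x ≤ N}.Finite := by
  refine ((List.finite_length_eq (Fin (N + 1)) d).image (List.map Fin.val)).subset ?_
  rintro L ⟨hlen, hle⟩
  lift L to List (Fin (N + 1)) using fun x hx => Nat.lt_succ_of_le (hle x hx)
  exact ⟨L, by simpa using hlen, rfl⟩

theorem List.le_headD_of_isChain_gt {α : Type*} [Preorder α] {L : List α}
    (hL : L.IsChain (· > ·)) {x : α} (hx : x ∈ L) (y : α) : x ≤ L.headD y := by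
  rcases L with _ | ⟨a, l⟩
  · cases hx
  rcases List.mem_cons.mp hx with rfl | hx
  · exact le_rfl
  · exact (List.rel_of_pairwise_cons (List.isChain_iff_pairwise.mp hL) hx).le

theorem oddCount_cons_of_even {a : ℕ} (ha : a % 2 = 0) (l : List ℕ) :
    oddCount (a :: l) = oddCount l := by
  simp [oddCount, ha]

theorem oddCount_cons_of_odd {a : ℕ} (ha : a % 2 = 1) (l : List ℕ) :
    oddCount (a :: l) = oddCount l + 1 := by
  simp [oddCount, ha]

theorem List.getLastD_cons_cons {α : Type*} (a b : α) (t : List α) (x : α) :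
    (a :: b :: t).getLastD x = (b :: t).getLastD x := by
  simp [List.getLastD_eq_getLast?, List.getLast?_cons_cons]

/-- Since odd parts are isolated and the last part is even, each odd part can be paired with
the even part following it; an even first part is then left over. -/
theorem two_mul_oddCount_lt_length : ∀ {L : List ℕ}, L ≠ [] → L.headD 0 % 2 = 0 →
    L.IsChain (fun a b => ¬(Odd a ∧ Odd b)) → Even (L.getLastD 1) →
    2 * oddCount L < L.length
  | [a], _, ha, _, _ => by simpa [oddCount] using ha
  | a :: b :: t, _, ha, hchain, hlast => by
    simp only [List.headD_cons] at ha
    rw [List.getLastD_cons_cons] at hlast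
    obtain ⟨hab, hchain⟩ := List.isChain_cons_cons.mp hchain
    rcases Nat.mod_two_eq_zero_or_one b with hb | hb
    · have := two_mul_oddCount_lt_length (L := b :: t) (by simp) hb hchain hlast
      simp only [oddCount_cons_of_even ha, List.length_cons] at this ⊢
      omega
    · rcases t with _ | ⟨c, t⟩
      · simp [Nat.even_iff, hb] at hlast
      rw [List.getLastD_cons_cons] at hlast
      obtain ⟨hbc, hchain⟩ := List.isChain_cons_cons.mp hchain
      have hc : c % 2 = 0 := by
        by_contra hc
        exact hbc ⟨Nat.odd_iff.mpr hb, Nat.odd_iff.mpr (by omega)⟩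
      have := two_mul_oddCount_lt_length (L := c :: t) (by simp) hc hchain hlast
      simp only [oddCount_cons_of_even ha, oddCount_cons_of_odd hb, List.length_cons] at this ⊢
      omega

theorem wt_cons_of_odd_headD {a : ℕ} (ha : a % 2 = 0) {T : List ℕ} (hT : T.headD 0 % 2 = 1) :
    wt (a :: T) = wt T := by
  rcases T with _ | ⟨b, t⟩
  · simp at hT
  simp only [List.headD_cons] at hT
  simp [wt, ha, hT, oddCount_cons_of_even ha]

theorem wt_cons_of_even_headD {a : ℕ} (ha : a % 2 = 0) {T : List ℕ} (hT : T.headD 0 % 2 = 0)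
    (hodd : 2 * oddCount T < T.length) :
    wt (a :: T) = wt T + 1 := by
  simp only [wt, List.headD_cons, ha, hT, if_true, oddCount_cons_of_even ha, List.length_cons]
  omega

theorem IrrEBP.two_mul_oddCount_lt_length {T : List ℕ} (hT : IrrEBP T)
    (heven : T.headD 0 % 2 = 0) : 2 * oddCount T < T.length :=
  _root_.two_mul_oddCount_lt_length hT.1.1 heven hT.1.2.2.2.2 hT.1.2.2.2.1

theorem IrrEBP.headD_pos {L : List ℕ} (hL : IrrEBP L) : 0 < L.headD 0 := by
  obtain ⟨⟨hne, hpos, -⟩, -⟩ := hL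
  rcases L with _ | ⟨a, l⟩
  · exact absurd rfl hne
  · exact hpos a List.mem_cons_self

theorem irrEBP_cons_cons_iff (a b : ℕ) (t : List ℕ) :
    IrrEBP (a :: b :: t) ↔ IrrEBP (b :: t) ∧ b < a ∧ a ≤ b + 2 ∧ ¬(Odd a ∧ Odd b) := by
  simp only [IrrEBP, EBP, List.Chain', List.isChain_cons_cons, List.getLastD_cons_cons,
    List.forall_mem_cons, ne_eq, reduceCtorEq, not_false_eq_true, true_and]
  constructor
  · rintro ⟨⟨⟨-, hpos⟩, ⟨hba, hgt⟩, hlast, ⟨hodd, hodds⟩⟩, h2, ⟨hab, hdif⟩⟩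
    exact ⟨⟨⟨hpos, hgt, hlast, hodds⟩, h2, hdif⟩, hba, hab, hodd⟩
  · rintro ⟨⟨⟨hpos, hgt, hlast, hodds⟩, h2, hdif⟩, hba, hab, hodd⟩
    exact ⟨⟨⟨by omega, hpos⟩, ⟨hba, hgt⟩, hlast, ⟨hodd, hodds⟩⟩, h2, ⟨hab, hdif⟩⟩

def irrEBPSet (d N : ℕ) : Set (List ℕ) :=
  {L : List ℕ | IrrEBP L ∧ L.length = d ∧ L.headD 0 = N}

theorem sPoly_eq_finsum (d N : ℕ) :
    sPoly d N = ∑ᶠ L ∈ irrEBPSet d N, X 0 ^ wt L * X 1 ^ L.sum :=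
  rfl

theorem irrEBPSet_finite (d N : ℕ) : (irrEBPSet d N).Finite := by
  refine (List.finite_length_eq_forall_mem_le d N).subset ?_
  rintro L ⟨hL, hlen, rfl⟩
  exact ⟨hlen, fun x hx => List.le_headD_of_isChain_gt hL.1.2.2.1 hx 0⟩

theorem irrEBPSet_eq_image_cons (d n : ℕ) (hd : 1 < d) :
    irrEBPSet d (2 * n) =
      List.cons (2 * n) '' (irrEBPSet (d - 1) (2 * n - 1) ∪ irrEBPSet (d - 1) (2 * n - 2)) := by
  ext L
  constructor
  · rintro ⟨hL, hlen, hhead⟩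
    rcases L with _ | ⟨a, _ | ⟨b, t⟩⟩
    · simp at hlen; omega
    · simp at hlen; omega
    simp only [List.headD_cons] at hhead
    subst hhead
    obtain ⟨hT, hba, hab, -⟩ := (irrEBP_cons_cons_iff _ _ _).mp hL
    have hlen' : (b :: t).length = d - 1 := by simp only [List.length_cons] at hlen ⊢; omega
    refine ⟨b :: t, ?_, rfl⟩
    rcases (by omega : b = 2 * n - 1 ∨ b = 2 * n - 2) with hb | hb
    · exact Or.inl ⟨hT, hlen', hb⟩
    · exact Or.inr ⟨hT, hlen', hb⟩
  · rintro ⟨T, ⟨hI, hlen, hhead⟩ | ⟨hI, hlen, hhead⟩, rfl⟩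
    all_goals
      have hpos := hI.headD_pos
      rcases T with _ | ⟨b, t⟩
      · simp at hlen; omega
      simp only [List.headD_cons] at hhead hpos
      refine ⟨(irrEBP_cons_cons_iff _ _ _).mpr ⟨hI, by omega, by omega, ?_⟩, ?_, rfl⟩
      · rintro ⟨h2n, -⟩
        exact Nat.not_odd_iff_even.mpr (even_two_mul n) h2n
      · simp only [List.length_cons] at hlen ⊢
        omega

theorem irrEBPSet_disjoint (d n : ℕ) :
    Disjoint (irrEBPSet d (2 * n - 1)) (irrEBPSet d (2 * n - 2)) := by
  rw [Set.disjoint_left]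
  rintro T ⟨hT, -, h1⟩ ⟨-, -, h2⟩
  have := hT.headD_pos
  omega

theorem monomial_cons_of_odd_headD (n : ℕ) {T : List ℕ} (hT : T.headD 0 % 2 = 1) :
    (X 0 ^ wt (2 * n :: T) * X 1 ^ (2 * n :: T).sum : MvPolynomial (Fin 2) ℤ) =
      X 1 ^ (2 * n) * (X 0 ^ wt T * X 1 ^ T.sum) := by
  rw [wt_cons_of_odd_headD (Nat.mul_mod_right 2 n) hT, List.sum_cons, pow_add]
  ring

theorem monomial_cons_of_even_headD (n : ℕ) {T : List ℕ} (hT : T.headD 0 % 2 = 0)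
    (hodd : 2 * oddCount T < T.length) :
    (X 0 ^ wt (2 * n :: T) * X 1 ^ (2 * n :: T).sum : MvPolynomial (Fin 2) ℤ) =
      X 1 ^ (2 * n) * (X 0 * (X 0 ^ wt T * X 1 ^ T.sum)) := by
  rw [wt_cons_of_even_headD (Nat.mul_mod_right 2 n) hT hodd, List.sum_cons, pow_add, pow_add]
  ring

/-- The recurrence `s(d, 2n) = q^{2n} (s(d-1, 2n-1) + x · s(d-1, 2n-2))`
for `d > 1`. -/
theorem sPoly_even_rec (d n : ℕ) (hd : 1 < d) :
    sPoly d (2 * n) =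
      MvPolynomial.X 1 ^ (2 * n) *
        (sPoly (d - 1) (2 * n - 1) +
          MvPolynomial.X 0 * sPoly (d - 1) (2 * n - 2)) := by
  rw [sPoly_eq_finsum, irrEBPSet_eq_image_cons d n hd,
    finsum_mem_image List.cons_injective.injOn,
    finsum_mem_union (irrEBPSet_disjoint _ n) (irrEBPSet_finite _ _) (irrEBPSet_finite _ _),
    sPoly_eq_finsum, sPoly_eq_finsum, mul_finsum_mem, mul_add, mul_finsum_mem, mul_finsum_mem]
  congr 1
  · refine finsum_mem_congr rfl fun T ⟨hT, _, hhead⟩ => monomial_cons_of_odd_headD n ?_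
    have := hT.headD_pos
    omega
  · refine finsum_mem_congr rfl fun T ⟨hT, _, hhead⟩ =>
      monomial_cons_of_even_headD n ?_ (hT.two_mul_oddCount_lt_length ?_) <;> omega
end

section
/- For all d ≥ 1 and n ≥ 1, s(d, 2n+1) = x^{2n-d} q^{2n² - 2dn + d² + 3n} · C(n-1, 2n-d)_{q²}, where C(A,B)_{q²} is the Gaussian binomial coefficient in q². -/
/-- The Gaussian binomial coefficient `[a choose b]_t`, defined via the
`q`-Pascal recurrence `[a+1, b+1]_t = [a, b]_t + t^{b+1} [a, b+1]_t`. -/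
def gbinom {R : Type*} [CommRing R] (t : R) : ℕ → ℕ → R
  | _, 0 => 1
  | 0, _ + 1 => 0
  | a + 1, b + 1 => gbinom t a b + t ^ (b + 1) * gbinom t a (b + 1)

/-- The Gaussian binomial with an integer lower index, equal to `0` when the
lower index is negative. -/
def gbinomZ {R : Type*} [CommRing R] (t : R) (a : ℕ) (b : ℤ) : R :=
  if 0 ≤ b then gbinom t a b.toNat else 0

open Finset MvPolynomial

section GaussianBinomial

variable {R : Type*} [CommRing R] (t : R)

@[simp]
lemma gbinom_zero_right (a : ℕ) : gbinom t a 0 = 1 := by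
  cases a <;> rfl

lemma gbinom_succ_succ (a b : ℕ) :
    gbinom t (a + 1) (b + 1) = gbinom t a b + t ^ (b + 1) * gbinom t a (b + 1) := rfl

lemma gbinom_eq_zero_of_lt {a b : ℕ} (h : a < b) : gbinom t a b = 0 := by
  induction a generalizing b with
  | zero => obtain ⟨b, rfl⟩ := Nat.exists_eq_succ_of_ne_zero h.ne'; rfl
  | succ a ih =>
    obtain ⟨b, rfl⟩ := Nat.exists_eq_succ_of_ne_zero (Nat.ne_zero_of_lt h)
    rw [gbinom_succ_succ, ih (by omega), ih (by omega), mul_zero, add_zero]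

lemma gbinom_self (a : ℕ) : gbinom t a a = 1 := by
  induction a with
  | zero => rfl
  | succ a ih =>
    rw [gbinom_succ_succ, ih, gbinom_eq_zero_of_lt t a.lt_succ_self, mul_zero, add_zero]

lemma gbinomZ_eq_zero_of_lt {a : ℕ} {b : ℤ} (h : (a : ℤ) < b) : gbinomZ t a b = 0 := by
  rw [gbinomZ, if_pos (by omega), gbinom_eq_zero_of_lt t (by omega)]

lemma gbinomZ_eq_zero_of_neg {a : ℕ} {b : ℤ} (h : b < 0) : gbinomZ t a b = 0 :=
  if_neg (by omega)

lemma gbinomZ_natCast (a b : ℕ) : gbinomZ t a b = gbinom t a b := rfl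

lemma gbinomZ_succ (a b : ℕ) :
    gbinomZ t (a + 1) b = gbinomZ t a ((b : ℤ) - 1) + t ^ b * gbinomZ t a b := by
  cases b with
  | zero => simp [gbinomZ, gbinom_zero_right]
  | succ b =>
    rw [gbinomZ_natCast, gbinomZ_natCast, gbinom_succ_succ, Nat.cast_succ, add_sub_cancel_right,
      gbinomZ_natCast]

end GaussianBinomial

lemma Finset.sum_powersetCard_succ_insert {α M : Type*} [DecidableEq α] [AddCommMonoid M]
    {a : α} {s : Finset α} (ha : a ∉ s) (k : ℕ) (f : Finset α → M) :
    ∑ S ∈ (insert a s).powersetCard (k + 1), f S =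
      ∑ S ∈ s.powersetCard (k + 1), f S + ∑ S ∈ s.powersetCard k, f (insert a S) := by
  rw [powersetCard_succ_insert ha, sum_union, sum_image]
  · exact insert_erase_invOn.2.injOn.mono fun S hS ↦ notMem_mono (mem_powersetCard.1 hS).1 ha
  · simp only [disjoint_left, mem_powersetCard, mem_image]
    rintro _ ⟨hS, -⟩ ⟨T, -, rfl⟩
    exact ha (hS (mem_insert_self a T))

/-- The `k`-subsets of `{1, …, m}` have sums at least `1 + ⋯ + k = k(k+1)/2`, and the excess is
counted by the Gaussian binomial. -/
lemma sum_powersetCard_Icc_pow_sum {R : Type*} [CommRing R] (t : R) (m k : ℕ) :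
    ∑ S ∈ (Icc 1 m).powersetCard k, t ^ (∑ i ∈ S, i) =
      t ^ (k * (k + 1) / 2) * gbinomZ t m ((m : ℤ) - k) := by
  induction m generalizing k with
  | zero =>
    cases k with
    | zero => simp [gbinomZ]
    | succ k => rw [gbinomZ_eq_zero_of_neg t (by omega), powersetCard_eq_empty.2 (by simp)]; simp
  | succ m ih =>
    cases k with
    | zero => rw [Nat.cast_zero, sub_zero, gbinomZ_natCast, gbinom_self]; simp
    | succ k =>
      have hm : m + 1 ∉ Icc 1 m := by simp
      have hinsert : ∀ S ∈ (Icc 1 m).powersetCard k,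
          t ^ (∑ i ∈ insert (m + 1) S, i) = t ^ (m + 1) * t ^ (∑ i ∈ S, i) := fun S hS => by
        rw [sum_insert (notMem_mono (mem_powersetCard.1 hS).1 hm), pow_add]
      rw [← insert_Icc_right_eq_Icc_add_one (by omega), sum_powersetCard_succ_insert hm,
        sum_congr rfl hinsert, ← mul_sum, ih, ih]
      obtain hmk | hkm := lt_or_ge m k
      · rw [gbinomZ_eq_zero_of_neg t (by omega), gbinomZ_eq_zero_of_neg t (by omega),
          gbinomZ_eq_zero_of_neg t (by omega)]
        simp
      · obtain ⟨c, rfl⟩ := Nat.exists_eq_add_of_le hkm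
        have htri : (k + 1) * (k + 1 + 1) / 2 = k * (k + 1) / 2 + (k + 1) := by
          rw [show (k + 1) * (k + 1 + 1) = k * (k + 1) + 2 * (k + 1) by ring,
            Nat.add_mul_div_left _ _ two_pos]
        have e1 : ((k + c : ℕ) : ℤ) - (k + 1 : ℕ) = (c : ℤ) - 1 := by push_cast; ring
        have e2 : ((k + c : ℕ) : ℤ) - k = c := by push_cast; ring
        have e3 : ((k + c + 1 : ℕ) : ℤ) - (k + 1 : ℕ) = c := by push_cast; ring
        rw [e1, e2, e3, gbinomZ_succ, htri]
        ring

def staircase (S : Finset ℕ) : ℕ → List ℕ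
  | 0 => []
  | j + 1 =>
    if j + 1 ∈ S then (2 * j + 3) :: (2 * j + 2) :: staircase S j
    else (2 * j + 2) :: staircase S j

lemma staircase_congr {S T : Finset ℕ} {j : ℕ} (h : ∀ i ≤ j, i ∈ S ↔ i ∈ T) :
    staircase S j = staircase T j := by
  induction j with
  | zero => rfl
  | succ j ih =>
    simp only [staircase, h (j + 1) le_rfl, ih fun i hi => h i (by omega)]

lemma pos_of_mem_staircase {S : Finset ℕ} {j x : ℕ} (hx : x ∈ staircase S j) : 0 < x := by
  induction j with
  | zero => simp [staircase] at hx
  | succ j ih =>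
    simp only [staircase] at hx
    split_ifs at hx <;> grind

lemma length_staircase (S : Finset ℕ) (j : ℕ) :
    (staircase S j).length = j + #{i ∈ Icc 1 j | i ∈ S} := by
  induction j with
  | zero => simp [staircase]
  | succ j ih =>
    rw [card_filter, sum_Icc_succ_top (by omega), ← card_filter]
    simp only [staircase]
    split_ifs <;> simp only [List.length_cons, ih] <;> omega

lemma oddCount_staircase (S : Finset ℕ) (j : ℕ) :
    oddCount (staircase S j) = #{i ∈ Icc 1 j | i ∈ S} := by
  induction j with
  | zero => simp [staircase, oddCount]
  | succ j ih =>
    rw [card_filter, sum_Icc_succ_top (by omega), ← card_filter, ← ih]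
    simp only [staircase, oddCount]
    split_ifs <;> simp [Nat.add_mod]

lemma sum_staircase (S : Finset ℕ) (j : ℕ) :
    (staircase S j).sum = j * (j + 1) + ∑ i ∈ Icc 1 j with i ∈ S, (2 * i + 1) := by
  induction j with
  | zero => simp [staircase]
  | succ j ih =>
    rw [sum_filter, sum_Icc_succ_top (by omega), ← sum_filter]
    simp only [staircase]
    split_ifs <;> simp only [List.sum_cons, ih] <;> ring

lemma mem_staircase_odd {S : Finset ℕ} {i j : ℕ} :
    2 * i + 1 ∈ staircase S j ↔ i ∈ S ∧ 1 ≤ i ∧ i ≤ j := by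
  induction j with
  | zero => simp [staircase]; omega
  | succ j ih =>
    simp only [staircase]
    obtain rfl | hi := eq_or_ne i (j + 1)
    · split_ifs <;> simp_all <;> omega
    · have h1 : 2 * i + 1 ≠ 2 * j + 3 := by omega
      have h2 : 2 * i + 1 ≠ 2 * j + 2 := by omega
      have h3 : i ≤ j + 1 ↔ i ≤ j := by omega
      split_ifs <;> simp only [List.mem_cons, ih, h1, h2, h3, false_or]

def BilliardStep (a b : ℕ) : Prop :=
  b < a ∧ a ≤ b + 2 ∧ (a % 2 = 0 ∨ b % 2 = 0)

lemma List.IsChain.getLastD_le {α : Type*} [Preorder α] {a : α} {l : List α}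
    (h : (a :: l).IsChain (· > ·)) : l.getLastD a ≤ a := by
  induction l generalizing a with
  | nil => rfl
  | cons b l ih =>
    rw [List.getLastD_cons]
    exact (ih h.tail).trans (List.rel_of_isChain_cons_cons h).le

lemma IrrEBP.isChain_billiardStep {L : List ℕ} (h : IrrEBP L) : L.IsChain BilliardStep := by
  obtain ⟨⟨-, -, hlt, -, hpar⟩, -, hgap⟩ := h
  refine List.isChain_iff_forall_rel_of_append_cons_cons.2 fun a b l₁ l₂ hL => ?_
  have hab := List.isChain_iff_forall_rel_of_append_cons_cons.1 hpar hL
  rw [Nat.odd_iff, Nat.odd_iff] at hab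
  exact ⟨List.isChain_iff_forall_rel_of_append_cons_cons.1 hlt hL,
    List.isChain_iff_forall_rel_of_append_cons_cons.1 hgap hL, by omega⟩

lemma isChain_billiardStep_staircase (S : Finset ℕ) (j : ℕ) :
    ((2 * j + 2) :: staircase S j).IsChain BilliardStep := by
  induction j with
  | zero => exact List.isChain_singleton _
  | succ j ih =>
    simp only [staircase]
    split_ifs
    · exact .cons_cons ⟨by omega, by omega, by omega⟩
        (.cons_cons ⟨by omega, by omega, by omega⟩ ih)
    · exact .cons_cons ⟨by omega, by omega, by omega⟩ ih

lemma getLastD_staircase (S : Finset ℕ) (j : ℕ) : (staircase S j).getLastD (2 * j + 2) = 2 := by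
  induction j with
  | zero => rfl
  | succ j ih =>
    simp only [staircase]
    split_ifs <;> simpa only [List.getLastD_cons] using ih

lemma exists_staircase_of_isChain {m : ℕ} {L : List ℕ}
    (hL : ((2 * m + 2) :: L).IsChain BilliardStep) (hlast : L.getLastD (2 * m + 2) = 2) :
    ∃ S ⊆ Icc 1 m, L = staircase S m := by
  induction m generalizing L with
  | zero =>
    obtain _ | ⟨p, Q⟩ := L
    · exact ⟨∅, empty_subset _, rfl⟩
    · have hp := (List.rel_of_isChain_cons_cons hL).1
      have hQ := (hL.tail.imp fun _ _ h => h.1).getLastD_le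
      rw [List.getLastD_cons] at hlast
      omega
  | succ m ih =>
    obtain _ | ⟨p, Q⟩ := L
    · simp at hlast
    have hp := List.rel_of_isChain_cons_cons hL
    rw [List.getLastD_cons] at hlast
    obtain rfl | rfl : p = 2 * m + 2 ∨ p = 2 * m + 3 := by unfold BilliardStep at hp; omega
    · obtain ⟨S, hS, rfl⟩ := ih hL.tail hlast
      have hm : m + 1 ∉ S := fun h => by simpa using hS h
      exact ⟨S, hS.trans (Icc_subset_Icc_right (by omega)), by simp [staircase, hm]⟩
    obtain _ | ⟨q, R⟩ := Q
    · simp at hlast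
    have hq := List.rel_of_isChain_cons_cons hL.tail
    rw [List.getLastD_cons] at hlast
    obtain rfl : q = 2 * m + 2 := by unfold BilliardStep at hq; omega
    obtain ⟨S, hS, rfl⟩ := ih hL.tail.tail hlast
    refine ⟨insert (m + 1) S, insert_subset (by simp) (hS.trans (Icc_subset_Icc_right (by omega))),
      ?_⟩
    rw [staircase, if_pos (mem_insert_self _ _), staircase_congr (S := insert (m + 1) S) (T := S)
      fun i hi => by rw [mem_insert, or_iff_right (by omega)]]

def oddBilliard (m : ℕ) (S : Finset ℕ) : List ℕ :=
  (2 * m + 3) :: (2 * m + 2) :: staircase S m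

lemma irrEBP_oddBilliard (m : ℕ) (S : Finset ℕ) : IrrEBP (oddBilliard m S) := by
  have hchain : (oddBilliard m S).IsChain BilliardStep :=
    .cons_cons ⟨by omega, by omega, by omega⟩ (isChain_billiardStep_staircase S m)
  have hlast : (oddBilliard m S).getLastD 1 = 2 := by
    simpa only [oddBilliard, List.getLastD_cons] using getLastD_staircase S m
  refine ⟨⟨List.cons_ne_nil _ _, fun x hx => ?_, hchain.imp fun _ _ h => h.1, hlast ▸ even_two,
    hchain.imp fun a b h => ?_⟩, hlast, hchain.imp fun _ _ h => h.2.1⟩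
  · simp only [oddBilliard, List.mem_cons] at hx
    obtain rfl | rfl | hx := hx
    exacts [by omega, by omega, pos_of_mem_staircase hx]
  · rw [Nat.odd_iff, Nat.odd_iff]
    exact fun hab => by unfold BilliardStep at h; omega

lemma IrrEBP.exists_eq_oddBilliard {m : ℕ} {L : List ℕ} (hL : IrrEBP L)
    (hhead : L.headD 0 = 2 * m + 3) : ∃ S ⊆ Icc 1 m, L = oddBilliard m S := by
  have hchain := hL.isChain_billiardStep
  obtain ⟨-, hlast, -⟩ := hL
  obtain _ | ⟨a, _ | ⟨p, Q⟩⟩ := L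
  · simp at hhead
  · simp_all
  obtain rfl : a = 2 * m + 3 := hhead
  have hp := List.rel_of_isChain_cons_cons hchain
  obtain rfl : p = 2 * m + 2 := by unfold BilliardStep at hp; omega
  simp only [List.getLastD_cons] at hlast
  obtain ⟨S, hS, rfl⟩ := exists_staircase_of_isChain hchain.tail hlast
  exact ⟨S, hS, rfl⟩

lemma oddBilliard_injOn (m : ℕ) : Set.InjOn (oddBilliard m) {S | S ⊆ Icc 1 m} := by
  intro S hS T hT h
  simp only [oddBilliard, List.cons.injEq, true_and] at h
  ext i
  by_cases hi : 1 ≤ i ∧ i ≤ m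
  · have := congrArg (2 * i + 1 ∈ ·) h
    simpa [mem_staircase_odd, hi] using this
  · exact iff_of_false (fun h => hi (by simpa using hS h)) (fun h => hi (by simpa using hT h))

section Numerics

variable {m : ℕ} {S : Finset ℕ}

lemma length_oddBilliard (hS : S ⊆ Icc 1 m) : (oddBilliard m S).length = m + 2 + #S := by
  rw [oddBilliard, List.length_cons, List.length_cons, length_staircase,
    filter_mem_eq_of_subset hS]
  ring

lemma wt_oddBilliard (hS : S ⊆ Icc 1 m) : wt (oddBilliard m S) = m - #S := by
  have hodd : oddCount (oddBilliard m S) = #S + 1 := by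
    rw [show #S = oddCount (staircase S m) by rw [oddCount_staircase, filter_mem_eq_of_subset hS]]
    simp [oddBilliard, oddCount, Nat.add_mod]
  rw [wt, if_neg (by simp [oddBilliard, Nat.add_mod]), length_oddBilliard hS, hodd]
  omega

lemma sum_oddBilliard (hS : S ⊆ Icc 1 m) :
    (oddBilliard m S).sum = m ^ 2 + 5 * m + 5 + #S + 2 * ∑ i ∈ S, i := by
  rw [oddBilliard, List.sum_cons, List.sum_cons, sum_staircase, filter_mem_eq_of_subset hS,
    sum_add_distrib, ← mul_sum, sum_const, smul_eq_mul, mul_one]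
  ring

end Numerics

lemma sPoly_odd_eq_sum (d m : ℕ) :
    sPoly d (2 * m + 3) = ∑ S ∈ (Icc 1 m).powerset with m + 2 + #S = d,
      X 0 ^ (m - #S) * X 1 ^ (m ^ 2 + 5 * m + 5 + #S + 2 * ∑ i ∈ S, i) := by
  have hsubset : ∀ {S}, S ∈ {S ∈ (Icc 1 m).powerset | m + 2 + #S = d} → S ⊆ Icc 1 m :=
    fun hS => mem_powerset.1 (mem_filter.1 hS).1
  have hset : {L | IrrEBP L ∧ L.length = d ∧ L.headD 0 = 2 * m + 3} =
      oddBilliard m '' ↑{S ∈ (Icc 1 m).powerset | m + 2 + #S = d} := by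
    ext L
    constructor
    · rintro ⟨hL, rfl, hhead⟩
      obtain ⟨S, hS, rfl⟩ := hL.exists_eq_oddBilliard hhead
      exact ⟨S, by simp [hS, length_oddBilliard hS], rfl⟩
    · rintro ⟨S, hS, rfl⟩
      refine ⟨irrEBP_oddBilliard m S, ?_, rfl⟩
      rw [length_oddBilliard (hsubset hS)]
      exact (mem_filter.1 hS).2
  rw [sPoly, hset, finsum_mem_image ((oddBilliard_injOn m).mono fun S hS => hsubset hS),
    finsum_mem_coe_finset]
  exact sum_congr rfl fun S hS => by rw [wt_oddBilliard (hsubset hS), sum_oddBilliard (hsubset hS)]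

lemma sPoly_odd_eq_zero_of_lt {d m : ℕ} (hd : d < m + 2) : sPoly d (2 * m + 3) = 0 := by
  rw [sPoly_odd_eq_sum, filter_false_of_mem fun S _ => by omega, sum_empty]

lemma sPoly_odd_add (m k : ℕ) :
    sPoly (m + 2 + k) (2 * m + 3) =
      X 0 ^ (m - k) * X 1 ^ (m ^ 2 + 5 * m + 5 + k + 2 * (k * (k + 1) / 2)) *
        gbinomZ (X 1 ^ 2) m ((m : ℤ) - k) := by
  have hcard : {S ∈ (Icc 1 m).powerset | m + 2 + #S = m + 2 + k} = (Icc 1 m).powersetCard k := by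
    rw [powersetCard_eq_filter]
    simp
  have hterm : ∀ S ∈ (Icc 1 m).powersetCard k,
      X 0 ^ (m - #S) * X 1 ^ (m ^ 2 + 5 * m + 5 + #S + 2 * ∑ i ∈ S, i) =
        (X 0 ^ (m - k) * X 1 ^ (m ^ 2 + 5 * m + 5 + k) : MvPolynomial (Fin 2) ℤ) *
          (X 1 ^ 2) ^ (∑ i ∈ S, i) := fun S hS => by
    rw [(mem_powersetCard.1 hS).2, pow_add, pow_mul, mul_assoc]
  rw [sPoly_odd_eq_sum, hcard, sum_congr rfl hterm, ← mul_sum, sum_powersetCard_Icc_pow_sum,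
    pow_add (X 1) _ (2 * _), pow_mul]
  ring

theorem sPoly_odd_closed_general (d n : ℕ) (hn : 1 ≤ n) :
    sPoly d (2 * n + 1) =
      MvPolynomial.X 0 ^ (2 * n - d) *
        MvPolynomial.X 1 ^ ((2 * n ^ 2 + d ^ 2 + 3 * n) - 2 * d * n) *
        gbinomZ (MvPolynomial.X 1 ^ 2) (n - 1)
          ((2 * n : ℤ) - (d : ℤ)) := by
  obtain ⟨m, rfl⟩ : ∃ m, n = m + 1 := ⟨n - 1, by omega⟩
  rw [show 2 * (m + 1) + 1 = 2 * m + 3 by ring, Nat.add_sub_cancel]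
  obtain hdm | hdm := lt_or_ge d (m + 2)
  · rw [sPoly_odd_eq_zero_of_lt hdm, gbinomZ_eq_zero_of_lt _ (by push_cast; omega), mul_zero]
  obtain ⟨k, rfl⟩ := Nat.exists_eq_add_of_le hdm
  have hexp : (2 * (m + 1) ^ 2 + (m + 2 + k) ^ 2 + 3 * (m + 1)) - 2 * (m + 2 + k) * (m + 1) =
      m ^ 2 + 5 * m + 5 + k + 2 * (k * (k + 1) / 2) := by
    rw [Nat.two_mul_div_two_of_even (Nat.even_mul_succ_self k)]
    exact Nat.sub_eq_of_eq_add (by ring)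
  have hindex : 2 * ((m + 1 : ℕ) : ℤ) - ((m + 2 + k : ℕ) : ℤ) = (m : ℤ) - k := by push_cast; ring
  rw [sPoly_odd_add, hexp, hindex, show 2 * (m + 1) - (m + 2 + k) = m - k by omega]

/-- Closed form `s(d, 2n+1) = x^{2n-d} q^{2n²-2dn+d²+3n} [n-1, 2n-d]_{q²}`
for `d, n ≥ 1`. -/
theorem sPoly_odd_closed (d n : ℕ) (hd : 1 ≤ d) (hn : 1 ≤ n) :
    sPoly d (2 * n + 1) =
      MvPolynomial.X 0 ^ (2 * n - d) *
        MvPolynomial.X 1 ^ ((2 * n ^ 2 + d ^ 2 + 3 * n) - 2 * d * n) *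
        gbinomZ (MvPolynomial.X 1 ^ 2) (n - 1)
          ((2 * n : ℤ) - (d : ℤ)) :=
  sPoly_odd_closed_general d n hn
end

section
/- The number of irreducible Euclidean billiard partitions with d parts and largest part 2n equals the ordinary binomial coefficient C(n-1, 2n-d-1), and with largest part 2n+1 equals C(n-1, 2n-d). -/
/-- The binomial coefficient with integer lower index, `0` when negative. -/
def chooseZ (a : ℕ) (b : ℤ) : ℕ := if 0 ≤ b then a.choose b.toNat else 0

/-!
In an irreducible partition the part after the largest one is forced by the local rules: an odd
part `2m+3` is followed by `2m+2`, an even part `2m+4` by `2m+3` or `2m+2`, and `[2]` is the only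
partition with largest part `2`. So the number `E(m, d)` of partitions with `d` parts and largest
part `2m+2` satisfies Pascal's recurrence `E(m+1, d+2) = E(m, d) + E(m, d+1)` with
`E(0, d) = [d = 1]`, whence `E(m, d) = C(m, 2m+1-d)`; a partition with largest part `2m+3` is
`2m+3` prepended to one with largest part `2m+2`.
-/

lemma irrEBP_singleton {a : ℕ} : IrrEBP [a] ↔ a = 2 := by
  simp only [IrrEBP, EBP, List.Chain', List.isChain_singleton, List.getLastD_cons]
  constructor
  · exact fun h => h.2.1
  · rintro rfl
    exact ⟨⟨List.cons_ne_nil _ _, by simp, trivial, even_two, trivial⟩, rfl, trivial⟩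

def IsNextPart (a b : ℕ) : Prop := b < a ∧ a ≤ b + 2 ∧ ¬(Odd a ∧ Odd b)

lemma irrEBP_cons_cons {a b : ℕ} {L : List ℕ} :
    IrrEBP (a :: b :: L) ↔ IsNextPart a b ∧ IrrEBP (b :: L) := by
  simp only [IrrEBP, EBP, List.Chain', IsNextPart, List.isChain_cons_cons, List.getLastD_cons,
    List.forall_mem_cons, ne_eq, reduceCtorEq, not_false_eq_true, true_and]
  constructor
  · rintro ⟨⟨⟨-, hpos⟩, ⟨hlt, hdec⟩, heven, ⟨hodd, hpar⟩⟩, hlast, hle, hgap⟩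
    exact ⟨⟨hlt, hle, hodd⟩, ⟨hpos, hdec, heven, hpar⟩, hlast, hgap⟩
  · rintro ⟨⟨hlt, hle, hodd⟩, ⟨hpos, hdec, heven, hpar⟩, hlast, hgap⟩
    exact ⟨⟨⟨by omega, hpos⟩, ⟨hlt, hdec⟩, heven, ⟨hodd, hpar⟩⟩, hlast, hle, hgap⟩

lemma IrrEBP.two_le_headD {L : List ℕ} (hL : IrrEBP L) : 2 ≤ L.headD 0 := by
  induction L with
  | nil => exact absurd rfl hL.1.1
  | cons a T ih =>
    cases T with
    | nil => simp [irrEBP_singleton.1 hL]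
    | cons b T =>
      obtain ⟨hab, hbT⟩ := irrEBP_cons_cons.1 hL
      exact (ih hbT).trans hab.1.le

lemma isNextPart_odd_iff {m b : ℕ} : IsNextPart (2 * m + 3) b ↔ b = 2 * m + 2 := by
  simp only [IsNextPart, Nat.odd_iff]
  omega

lemma isNextPart_even_iff {m b : ℕ} :
    IsNextPart (2 * m + 4) b ↔ b = 2 * m + 3 ∨ b = 2 * m + 2 := by
  simp only [IsNextPart, Nat.odd_iff]
  omega

def irrSet (h d : ℕ) : Set (List ℕ) := {L | IrrEBP L ∧ L.length = d ∧ L.headD 0 = h}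

lemma irrSet_zero (h : ℕ) : irrSet h 0 = ∅ :=
  Set.eq_empty_of_forall_notMem fun _ hL => hL.1.1.1 (List.eq_nil_of_length_eq_zero hL.2.1)

lemma irrSet_one (h : ℕ) : irrSet h 1 = if h = 2 then {[2]} else ∅ := by
  ext L
  simp only [irrSet, Set.mem_ofPred_eq, List.length_eq_one_iff]
  constructor
  · rintro ⟨hL, ⟨a, rfl⟩, rfl⟩
    rw [irrEBP_singleton.1 hL]
    simp
  · split_ifs with h2
    · rintro rfl
      exact ⟨irrEBP_singleton.2 rfl, ⟨2, rfl⟩, h2.symm⟩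
    · exact False.elim

lemma irrSet_add_two (a d : ℕ) :
    irrSet a (d + 2) =
      (a :: ·) '' {M | IrrEBP M ∧ M.length = d + 1 ∧ IsNextPart a (M.headD 0)} := by
  ext L
  constructor
  · rintro ⟨hL, hlen, rfl⟩
    obtain ⟨x, M, rfl⟩ := List.exists_cons_of_length_eq_add_one hlen
    obtain ⟨b, T, rfl⟩ := List.exists_cons_of_length_eq_add_one (Nat.succ_inj.1 hlen)
    obtain ⟨hnext, hM⟩ := irrEBP_cons_cons.1 hL
    exact ⟨b :: T, ⟨hM, Nat.succ_inj.1 hlen, hnext⟩, rfl⟩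
  · rintro ⟨M, ⟨hM, hlen, hnext⟩, rfl⟩
    obtain ⟨b, T, rfl⟩ := List.exists_cons_of_length_eq_add_one hlen
    exact ⟨irrEBP_cons_cons.2 ⟨hnext, hM⟩, congrArg (· + 1) hlen, rfl⟩

lemma irrSet_two_add_two (d : ℕ) : irrSet 2 (d + 2) = ∅ := by
  rw [irrSet_add_two, Set.image_eq_empty]
  exact Set.eq_empty_of_forall_notMem fun _ ⟨hM, _, hnext⟩ => hM.two_le_headD.not_gt hnext.1

lemma irrSet_odd_add_two (m d : ℕ) :
    irrSet (2 * m + 3) (d + 2) = ((2 * m + 3) :: ·) '' irrSet (2 * m + 2) (d + 1) := by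
  simp only [irrSet_add_two, isNextPart_odd_iff]
  rfl

lemma irrSet_even_add_two (m d : ℕ) :
    irrSet (2 * m + 4) (d + 2) =
      ((2 * m + 4) :: ·) '' (irrSet (2 * m + 3) (d + 1) ∪ irrSet (2 * m + 2) (d + 1)) := by
  rw [irrSet_add_two]
  congr 1
  ext M
  simp only [irrSet, Set.mem_ofPred_eq, Set.mem_union, isNextPart_even_iff, and_or_left]

open Finset in
lemma finite_setOf_isChain_gt (h : ℕ) :
    {L : List ℕ | L.IsChain (· > ·) ∧ L.headD 0 ≤ h}.Finite := by
  refine (((range (h + 1)).powerset.finite_toSet).image (fun s => s.sort (· ≥ ·))).subset ?_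
  rintro L ⟨hchain, hhead⟩
  have hpw : L.Pairwise (· > ·) := List.isChain_iff_pairwise.1 hchain
  refine ⟨L.toFinset, ?_, (List.toFinset_sort _ hpw.nodup).2 (hpw.imp le_of_lt)⟩
  rw [mem_coe, mem_powerset]
  intro x hx
  rw [List.mem_toFinset] at hx
  cases L with
  | nil => simp at hx
  | cons a T =>
    have hxa : x ≤ a := (List.mem_cons.1 hx).elim le_of_eq
      fun hxT => ((List.pairwise_cons.1 hpw).1 x hxT).le
    exact mem_range.2 (Nat.lt_succ_of_le (hxa.trans hhead))

lemma irrSet_finite (h d : ℕ) : (irrSet h d).Finite :=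
  (finite_setOf_isChain_gt h).subset fun _ hL => ⟨hL.1.1.2.2.1, hL.2.2.le⟩

lemma ncard_irrSet_odd_succ (m d : ℕ) :
    (irrSet (2 * m + 3) (d + 1)).ncard = (irrSet (2 * m + 2) d).ncard := by
  cases d with
  | zero => rw [irrSet_one, if_neg (by omega), irrSet_zero]
  | succ d => rw [irrSet_odd_add_two, Set.ncard_image_of_injective _ List.cons_injective]

lemma ncard_irrSet_even_add_two (m d : ℕ) :
    (irrSet (2 * m + 4) (d + 2)).ncard =
      (irrSet (2 * m + 2) d).ncard + (irrSet (2 * m + 2) (d + 1)).ncard := by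
  have hdisj : Disjoint (irrSet (2 * m + 3) (d + 1)) (irrSet (2 * m + 2) (d + 1)) :=
    Set.disjoint_left.2 fun _ h₁ h₂ => by have := h₁.2.2.symm.trans h₂.2.2; omega
  rw [irrSet_even_add_two, Set.ncard_image_of_injective _ List.cons_injective,
    Set.ncard_union_eq hdisj (irrSet_finite _ _) (irrSet_finite _ _), ncard_irrSet_odd_succ]

lemma chooseZ_of_neg {a : ℕ} {b : ℤ} (hb : b < 0) : chooseZ a b = 0 := if_neg (by omega)

lemma chooseZ_of_lt {a : ℕ} {b : ℤ} (hab : (a : ℤ) < b) : chooseZ a b = 0 := by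
  unfold chooseZ
  split_ifs
  · exact Nat.choose_eq_zero_of_lt (by omega)
  · rfl

lemma chooseZ_succ_succ (a : ℕ) (b : ℤ) :
    chooseZ (a + 1) (b + 1) = chooseZ a b + chooseZ a (b + 1) := by
  rcases lt_trichotomy b (-1) with hb | rfl | hb
  · rw [chooseZ_of_neg (by omega), chooseZ_of_neg (by omega), chooseZ_of_neg (by omega)]
  · norm_num [chooseZ]
  · unfold chooseZ
    rw [if_pos (by omega), if_pos (by omega), if_pos (by omega),
      show (b + 1).toNat = b.toNat + 1 by omega]
    exact Nat.choose_succ_succ' a b.toNat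

theorem ncard_irrSet_even (m d : ℕ) :
    (irrSet (2 * m + 2) d).ncard = chooseZ m (2 * m + 1 - d) := by
  induction m generalizing d with
  | zero =>
    match d with
    | 0 => rw [irrSet_zero, Set.ncard_empty, chooseZ_of_lt (by omega)]
    | 1 => rw [irrSet_one, if_pos rfl, Set.ncard_singleton]; rfl
    | d + 2 => rw [irrSet_two_add_two, Set.ncard_empty, chooseZ_of_neg (by omega)]
  | succ m ih =>
    match d with
    | 0 => rw [irrSet_zero, Set.ncard_empty, chooseZ_of_lt (by omega)]
    | 1 => rw [irrSet_one, if_neg (by omega), Set.ncard_empty, chooseZ_of_lt (by omega)]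
    | d + 2 =>
      rw [show 2 * (m + 1) + 2 = 2 * m + 4 by ring, ncard_irrSet_even_add_two, ih, ih, add_comm]
      convert (chooseZ_succ_succ m (2 * m - d)).symm using 3 <;> omega

theorem ncard_irrSet_odd (m d : ℕ) :
    (irrSet (2 * m + 3) d).ncard = chooseZ m (2 * m + 2 - d) := by
  cases d with
  | zero => rw [irrSet_zero, Set.ncard_empty, chooseZ_of_lt (by omega)]
  | succ d =>
    rw [ncard_irrSet_odd_succ, ncard_irrSet_even]
    congr 1
    push_cast
    ring

theorem card_irr_general (d n : ℕ) (hn : 1 ≤ n) :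
    {L : List ℕ | IrrEBP L ∧ L.length = d ∧ L.headD 0 = 2 * n}.ncard =
      chooseZ (n - 1) ((2 * n : ℤ) - (d : ℤ) - 1) ∧
    {L : List ℕ | IrrEBP L ∧ L.length = d ∧ L.headD 0 = 2 * n + 1}.ncard =
      chooseZ (n - 1) ((2 * n : ℤ) - (d : ℤ)) := by
  obtain ⟨m, rfl⟩ : ∃ m, n = m + 1 := ⟨n - 1, by omega⟩
  refine ⟨?_, ?_⟩
  · change (irrSet (2 * (m + 1)) d).ncard = _
    rw [show 2 * (m + 1) = 2 * m + 2 by ring, ncard_irrSet_even]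
    congr 1
    push_cast
    ring
  · change (irrSet (2 * (m + 1) + 1) d).ncard = _
    rw [show 2 * (m + 1) + 1 = 2 * m + 3 by ring, ncard_irrSet_odd]
    congr 1

/-- The number of irreducible Euclidean billiard partitions with `d` parts and
largest part `2n` is `C(n-1, 2n-d-1)`, and with largest part `2n+1` it is
`C(n-1, 2n-d)`. -/
theorem card_irr (d n : ℕ) (hd : 1 ≤ d) (hn : 1 ≤ n) :
    {L : List ℕ | IrrEBP L ∧ L.length = d ∧ L.headD 0 = 2 * n}.ncard =
      chooseZ (n - 1) ((2 * n : ℤ) - (d : ℤ) - 1) ∧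
    {L : List ℕ | IrrEBP L ∧ L.length = d ∧ L.headD 0 = 2 * n + 1}.ncard =
      chooseZ (n - 1) ((2 * n : ℤ) - (d : ℤ)) :=
  card_irr_general d n hn
end

section
/- For any Euclidean billiard partition with d parts and s odd parts, one has 2s ≤ d-1 if the largest part is even, and 2s ≤ d if the largest part is odd, so that the weights φ are positive integers. -/
/-- The weight `φ` of a Euclidean billiard partition: `2^{d-1-2s}` if the
largest part is even, `2^{d-2s}` if it is odd. -/
def phi (L : List ℕ) : ℕ :=
  if L.headD 0 % 2 = 0 then 2 ^ (L.length - 1 - 2 * oddCount L)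
  else 2 ^ (L.length - 2 * oddCount L)

lemma oddCount_cons (a : ℕ) (t : List ℕ) :
    oddCount (a :: t) = (if a % 2 = 1 then 1 else 0) + oddCount t := by
  simp [oddCount, List.filter_cons]; split <;> simp <;> omega

lemma ebp_key : ∀ (L : List ℕ), L ≠ [] → Even (L.getLastD 1) →
    L.Chain' (fun a b => ¬(Odd a ∧ Odd b)) →
    (Even (L.headD 0) → 2 * oddCount L + 1 ≤ L.length) ∧
    (Odd (L.headD 0) → 2 * oddCount L ≤ L.length)
  | [], h, _, _ => absurd rfl h
  | [a], _, hlast, _ => by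
    simp at hlast
    have ha := Nat.even_iff.mp hlast
    simp only [List.headD_cons]
    constructor
    · intro _; simp [oddCount_cons, oddCount, ha]
    · intro h; rw [Nat.odd_iff] at h; omega
  | a :: b :: t, _, hlast, hch => by
    have hch' : (b :: t).Chain' (fun a b => ¬(Odd a ∧ Odd b)) :=
      (List.isChain_cons_cons.mp hch).2
    have hab : ¬(Odd a ∧ Odd b) := (List.isChain_cons_cons.mp hch).1
    have hlast' : Even ((b :: t).getLastD 1) := by simpa using hlast
    have ih := ebp_key (b :: t) (by simp) hlast' hch'
    simp only [List.headD_cons] at ih ⊢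
    rw [Nat.odd_iff, Nat.odd_iff] at hab
    rw [Nat.even_iff, Nat.odd_iff]
    rw [Nat.even_iff, Nat.odd_iff] at ih
    simp only [oddCount_cons, List.length_cons] at ih ⊢
    have ha2 := Nat.mod_two_eq_zero_or_one a
    have hb2 := Nat.mod_two_eq_zero_or_one b
    rcases ha2 with h | h <;> rcases hb2 with h' | h' <;>
      simp [h, h'] at ih ⊢ <;> omega

/-- For a Euclidean billiard partition with `d` parts and `s` odd parts:
if the largest part is even then `2s ≤ d - 1`, if it is odd then `2s ≤ d`;
hence the weight `φ` is a positive integer. -/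
theorem weight_exponent_nonneg (L : List ℕ) (hL : EBP L) :
    (Even (L.headD 0) → 2 * oddCount L + 1 ≤ L.length) ∧
    (Odd (L.headD 0) → 2 * oddCount L ≤ L.length) ∧
    0 < phi L := by
  obtain ⟨hne, -, -, hlast, hch⟩ := hL
  have h := ebp_key L hne hlast hch
  refine ⟨h.1, h.2, ?_⟩
  unfold phi
  split <;> positivity
end
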